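/- Let {f_t} be a real sequence, ε > 0, and suppose there exists t_ε such that for all t ≥ t_ε: (i) if f_t ≥ ε then f_{t+1} ≤ f_t - c β_t for some c > 0, and (ii) |f_{t+1} - f_t| < ε, where β_t > 0 with Σ_t β_t = ∞. Then limsup_{t→∞} f_t ≤ 2ε. -/

import Mathlib

/-!
Above `tε`, the sequence loses at least `c β t` at every step while `f t ≥ ε`; since `∑ β = ∞`
it cannot stay above `ε` forever. Once below `ε`, it never exceeds `2ε`: from below `ε` a single
step adds less than `ε`, and from the band `[ε, 2ε)` it moves down.
-/

open Filter

lemma tendsto_atBot_of_succ_le_sub_mul {g β : ℕ → ℝ} {c : ℝ} (hc : 0 < c)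
    (hβ : ∀ n, 0 ≤ β n) (hβdiv : ¬ Summable β) (hg : ∀ n, g (n + 1) ≤ g n - c * β n) :
    Tendsto g atTop atBot := by
  have hle : ∀ n, g n ≤ g 0 - c * ∑ i ∈ Finset.range n, β i := by
    intro n
    induction n with
    | zero => simp
    | succ n ih =>
      rw [Finset.sum_range_succ]
      linarith [hg n]
  have hsum : Tendsto (fun n => ∑ i ∈ Finset.range n, β i) atTop atTop :=
    (not_summable_iff_tendsto_nat_atTop_of_nonneg hβ).mp hβdiv
  refine tendsto_atBot_mono hle (tendsto_atBot_add_const_left _ _ ?_)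
  exact tendsto_neg_atTop_atBot.comp (hsum.const_mul_atTop hc)

lemma exists_ge_lt_of_le_imp_succ_le_sub_mul {f β : ℕ → ℝ} {ε c : ℝ} {N : ℕ} (hc : 0 < c)
    (hβ : ∀ t, 0 ≤ β t) (hβdiv : ¬ Summable β)
    (hdec : ∀ t ≥ N, ε ≤ f t → f (t + 1) ≤ f t - c * β t) :
    ∃ t ≥ N, f t < ε := by
  by_contra! hge
  have hshift : Tendsto (fun n => f (n + N)) atTop atBot := by
    refine tendsto_atBot_of_succ_le_sub_mul (β := fun n => β (n + N)) hc (fun n => hβ _)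
      (mt (summable_nat_add_iff N).mp hβdiv) fun n => ?_
    rw [Nat.add_right_comm]
    exact hdec _ (Nat.le_add_left N n) (hge _ (Nat.le_add_left N n))
  obtain ⟨n, hn⟩ := (hshift.eventually_lt_atBot ε).exists
  exact (hge _ (Nat.le_add_left N n)).not_gt hn

lemma lt_add_of_le_imp_succ_le_of_succ_lt_add {f : ℕ → ℝ} {a δ : ℝ} {t₀ : ℕ}
    (h₀ : f t₀ < a + δ) (hdec : ∀ t ≥ t₀, a ≤ f t → f (t + 1) ≤ f t)
    (hjump : ∀ t ≥ t₀, f (t + 1) < f t + δ) :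
    ∀ t ≥ t₀, f t < a + δ := by
  intro t ht
  induction t, ht using Nat.le_induction with
  | base => exact h₀
  | succ t ht ih =>
    rcases lt_or_ge (f t) a with hlt | hge
    · linarith [hjump t ht]
    · linarith [hdec t ht hge]

lemma Real.limsup_le_of_nonneg_of_eventually_le {ι : Type*} {l : Filter ι} {u : ι → ℝ} {a : ℝ}
    (ha : 0 ≤ a) (h : ∀ᶠ i in l, u i ≤ a) : limsup u l ≤ a := by
  by_cases hcob : l.IsCoboundedUnder (· ≤ ·) u
  · exact limsup_le_of_le hcob h
  · rw [Real.limsup_of_not_isCoboundedUnder hcob]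
    exact ha

theorem stmt_17 (f β : ℕ → ℝ) (hβpos : ∀ t, 0 < β t)
    (hβdiv : ¬ Summable β) (ε c : ℝ) (hε : 0 < ε) (hc : 0 < c)
    (tε : ℕ)
    (hdec : ∀ t ≥ tε, ε ≤ f t → f (t + 1) ≤ f t - c * β t)
    (hclose : ∀ t ≥ tε, |f (t + 1) - f t| < ε) :
    Filter.limsup f atTop ≤ 2 * ε := by
  obtain ⟨t₀, ht₀, hft₀⟩ :=
    exists_ge_lt_of_le_imp_succ_le_sub_mul hc (fun t => (hβpos t).le) hβdiv hdec
  have hbound : ∀ t ≥ t₀, f t < ε + ε := by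
    refine lt_add_of_le_imp_succ_le_of_succ_lt_add (by linarith) (fun t ht hft => ?_)
      (fun t ht => ?_)
    · linarith [hdec t (ht₀.trans ht) hft, mul_pos hc (hβpos t)]
    · linarith [(abs_sub_lt_iff.mp (hclose t (ht₀.trans ht))).1]
  refine Real.limsup_le_of_nonneg_of_eventually_le (by linarith) ?_
  filter_upwards [eventually_ge_atTop t₀] with t ht
  linarith [hbound t ht]
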